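/- Let V be a complex vector space of dimension n and φ ∈ End(V). If φ is diagonalizable with n distinct eigenvalues, then the algebraic multiplicity of the eigenvalue 0 of ad φ is exactly n. Conversely, if the multiplicity of 0 as a root of the characteristic polynomial of ad φ equals n, then φ is diagonalizable with n distinct eigenvalues. -/

import Mathlib

/-!
Over an algebraically closed field, `V` is the direct sum of the generalized eigenspaces `V_μ` of
`φ`, of dimensions `m_μ` with `∑ m_μ = n`. The multiplicity of `0` as a root of the
characteristic polynomial of `ad φ` is the dimension of its generalized `0`-eigenspace, and every
`T` mapping `V_μ` into itself and killing the other `V_ν` lies there: `T ↦ φ T` and `T ↦ T φ`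
commute and both act on such `T` with the single generalized eigenvalue `μ`. Hence the
multiplicity is at least `∑ m_μ² ≥ ∑ m_μ = n`, with equality only if every `m_μ = 1`.
Conversely, if `φ` has an eigenbasis `e_i` with distinct eigenvalues `λ_i`, the elementary maps
`E_ij` form an eigenbasis of `ad φ` with eigenvalues `λ_i - λ_j`, exactly `n` of which vanish.
-/

open Polynomial Module LinearMap Finset

theorem Finset.forall_le_one_of_sum_sq_le_sum {ι : Type*} (s : Finset ι) (m : ι → ℕ)
    (h : ∑ i ∈ s, m i ^ 2 ≤ ∑ i ∈ s, m i) : ∀ i ∈ s, m i ≤ 1 := by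
  have hle (i) (_ : i ∈ s) : m i ≤ m i ^ 2 := Nat.le_self_pow two_ne_zero _
  intro i hi
  have := (sum_eq_sum_iff_of_le hle).1 (le_antisymm (sum_le_sum hle) h) i hi
  nlinarith

theorem Polynomial.rootMultiplicity_prod_X_sub_C {R ι : Type*} [CommRing R] [IsDomain R]
    [DecidableEq R] [Fintype ι] (g : ι → R) (a : R) :
    rootMultiplicity a (∏ i, (X - C (g i))) = #{i | g i = a} := by
  have : ∏ i, (X - C (g i)) = ((univ.val.map g).map fun a => X - C a).prod := by
    rw [Multiset.map_map]; rfl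
  rw [← count_roots, this, roots_multiset_prod_X_sub_C, Multiset.count_map, Finset.card,
    Finset.filter_val]
  exact congrArg _ (Multiset.filter_congr fun _ _ => eq_comm)

theorem Polynomial.exists_injective_eq_prod_X_sub_C_of_nodup_roots {R : Type*} [CommRing R]
    [IsDomain R] {p : R[X]} (hp : p.Monic) (hroots : p.roots.card = p.natDegree)
    (hnodup : p.roots.Nodup) :
    ∃ l : Fin p.natDegree → R, Function.Injective l ∧ p = ∏ i, (X - C (l i)) := by
  let s : Finset R := ⟨p.roots, hnodup⟩
  let e : Fin p.natDegree ≃ s := (s.equivFinOfCardEq hroots).symm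
  refine ⟨fun i => e i, Subtype.val_injective.comp e.injective, ?_⟩
  conv_lhs => rw [← prod_multiset_X_sub_C_of_monic_of_roots_card_eq hp hroots]
  rw [e.prod_comp (fun x : s => X - C (x : R)), Finset.prod_coe_sort s (fun x => X - C x)]
  rfl

theorem Module.Basis.end_apply_eq_smul {R M ι : Type*} [CommSemiring R] [AddCommMonoid M]
    [Module R M] [Fintype ι] [DecidableEq ι] (b : Basis ι R M) (i j : ι) (x : M) :
    b.end (i, j) x = b.repr x j • b i := by
  have : b.end (i, j) = (b.coord j).smulRight (b i) :=
    b.ext fun k => by simp [b.end_apply_apply, Finsupp.single_apply, eq_comm]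
  rw [this, smulRight_apply, Basis.coord_apply]

theorem Module.End.genEigenspace_inf_le_sub {R M : Type*} [CommRing R] [AddCommGroup M]
    [Module R M] (f₁ f₂ : End R M) (μ₁ μ₂ : R) (k₁ k₂ : ℕ∞) (h : Commute f₁ f₂) :
    f₁.genEigenspace μ₁ k₁ ⊓ f₂.genEigenspace μ₂ k₂ ≤
      (f₁ - f₂).genEigenspace (μ₁ - μ₂) (k₁ + k₂) := by
  have hneg : f₂.genEigenspace μ₂ k₂ ≤ (-f₂).genEigenspace (-μ₂) k₂ := by
    simpa using f₂.genEigenspace_le_smul μ₂ (-1) k₂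
  simpa [sub_eq_add_neg] using (inf_le_inf_left _ hneg).trans
    (End.genEigenspace_inf_le_add f₁ (-f₂) μ₁ (-μ₂) k₁ k₂ h.neg_right)

section Eigenbasis

variable {R M : Type*} [CommRing R] [AddCommGroup M] [Module R M] [Free R M] [Module.Finite R M]

theorem LinearMap.charpoly_eq_prod_of_apply_eq_smul {ι : Type*} [Fintype ι] [DecidableEq ι]
    (b : Basis ι R M) {f : End R M} {d : ι → R} (h : ∀ i, f (b i) = d i • b i) :
    f.charpoly = ∏ i, (X - C (d i)) := by
  have : toMatrix b b f = Matrix.diagonal d := by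
    ext i j
    rcases eq_or_ne i j with rfl | hij <;> simp [toMatrix_apply, *]
  rw [← charpoly_toMatrix f b, this, Matrix.charpoly_diagonal]

theorem LinearMap.charpoly_mulLeft_sub_mulRight_of_apply_eq_smul {ι : Type*} [Fintype ι]
    [DecidableEq ι] (b : Basis ι R M) {f : End R M} {d : ι → R} (h : ∀ i, f (b i) = d i • b i) :
    (mulLeft R f - mulRight R f).charpoly = ∏ p : ι × ι, (X - C (d p.1 - d p.2)) :=
  charpoly_eq_prod_of_apply_eq_smul b.end fun ⟨i, j⟩ => by
    simpa [Ring.lie_def] using b.lie_end_of_apply_eq_smul d f h i j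

end Eigenbasis

section GenEigenspace

variable {K V : Type*} [Field K] [AddCommGroup V] [Module K V] [FiniteDimensional K V]

theorem Module.End.exists_basis_apply_eq_smul_of_charpoly_eq {ι : Type*} [Fintype ι]
    (hι : Fintype.card ι = finrank K V) {f : End K V} {l : ι → K} (hl : Function.Injective l)
    (hf : f.charpoly = ∏ i, (X - C (l i))) : ∃ b : Basis ι K V, ∀ i, f (b i) = l i • b i := by
  have hev (i : ι) : f.HasEigenvalue (l i) := by
    rw [End.hasEigenvalue_iff_isRoot_charpoly, IsRoot, hf, eval_prod]
    exact prod_eq_zero (mem_univ i) (by simp)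
  choose v hv using fun i => (hev i).exists_hasEigenvector
  have hli := f.eigenvectors_linearIndependent' l hl v hv
  refine ⟨Basis.mk hli (hli.span_eq_top_of_card_eq_finrank' hι).ge, fun i => ?_⟩
  rw [Basis.mk_apply]
  exact (hv i).apply_eq_smul

theorem LinearMap.rootMultiplicity_zero_charpoly_mulLeft_sub_mulRight_of_apply_eq_smul
    {ι : Type*} [Fintype ι] [DecidableEq ι] (b : Basis ι K V) {f : End K V} {d : ι → K}
    (hd : Function.Injective d) (h : ∀ i, f (b i) = d i • b i) :
    (mulLeft K f - mulRight K f).charpoly.rootMultiplicity 0 = Fintype.card ι := by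
  classical
  rw [charpoly_mulLeft_sub_mulRight_of_apply_eq_smul b h, rootMultiplicity_prod_X_sub_C]
  simp only [sub_eq_zero, hd.eq_iff]
  rw [← univ_product_univ, ← diag_eq_filter, diag_card, card_univ]

theorem Module.End.mem_maxGenEigenspace_mulLeft {f T : End K V} {μ : K}
    (hT : range T ≤ f.maxGenEigenspace μ) : T ∈ End.maxGenEigenspace (mulLeft K f) μ := by
  rw [End.mem_maxGenEigenspace]
  refine ⟨finrank K V, ?_⟩
  have : mulLeft K f - μ • 1 = mulLeft K (f - μ • 1) := by ext; simp [sub_mul]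
  rw [this, pow_mulLeft, mulLeft_apply]
  ext x
  have hx := hT (mem_range_self T x)
  rw [End.maxGenEigenspace_eq_genEigenspace_finrank, End.mem_genEigenspace_nat] at hx
  exact hx

theorem Module.End.mem_maxGenEigenspace_mulRight [IsAlgClosed K] {f T : End K V} {μ : K}
    (hT : ∀ ν ≠ μ, f.maxGenEigenspace ν ≤ ker T) :
    T ∈ End.maxGenEigenspace (mulRight K f) μ := by
  rw [End.mem_maxGenEigenspace]
  refine ⟨finrank K V, ?_⟩
  have : mulRight K f - μ • 1 = mulRight K (f - μ • 1) := by ext; simp [mul_sub]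
  rw [this, pow_mulRight, mulRight_apply, ← ker_eq_top, eq_top_iff,
    ← f.iSup_maxGenEigenspace_eq_top]
  refine iSup_le fun ν x hx => ?_
  rw [mem_ker, End.mul_apply]
  obtain rfl | hν := eq_or_ne ν μ
  · rw [End.maxGenEigenspace_eq_genEigenspace_finrank, End.mem_genEigenspace_nat] at hx
    rw [hx, map_zero]
  · have hcomm : Commute f ((f - μ • 1) ^ finrank K V) :=
      ((Commute.refl f).sub_right ((Commute.one_right f).smul_right μ)).pow_right _
    exact hT ν hν (End.mapsTo_maxGenEigenspace_of_comm hcomm ν hx)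

theorem Module.End.mem_maxGenEigenspace_zero_mulLeft_sub_mulRight [IsAlgClosed K]
    {f T : End K V} {μ : K} (hrange : range T ≤ f.maxGenEigenspace μ)
    (hker : ∀ ν ≠ μ, f.maxGenEigenspace ν ≤ ker T) :
    T ∈ End.maxGenEigenspace (mulLeft K f - mulRight K f) 0 := by
  simpa using End.genEigenspace_inf_le_sub _ _ μ μ ⊤ ⊤ (commute_mulLeft_right f f)
    ⟨End.mem_maxGenEigenspace_mulLeft hrange, End.mem_maxGenEigenspace_mulRight hker⟩

theorem Module.End.maxGenEigenspace_eq_bot_of_notMem_roots {f : End K V} {μ : K}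
    (hμ : μ ∉ f.charpoly.roots) : f.maxGenEigenspace μ = ⊥ := by
  classical
  rw [← Submodule.finrank_eq_zero, finrank_maxGenEigenspace_eq, ← count_roots,
    Multiset.count_eq_zero.2 hμ]

theorem Module.End.isInternal_maxGenEigenspace_roots_charpoly [IsAlgClosed K] [DecidableEq K]
    (f : End K V) :
    DirectSum.IsInternal fun μ : f.charpoly.roots.toFinset => f.maxGenEigenspace μ := by
  refine DirectSum.isInternal_submodule_of_iSupIndep_of_iSup_eq_top
    (f.independent_maxGenEigenspace.comp Subtype.val_injective) (eq_top_iff.2 ?_)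
  rw [← f.iSup_maxGenEigenspace_eq_top]
  refine iSup_le fun μ => ?_
  by_cases hμ : μ ∈ f.charpoly.roots.toFinset
  · exact le_iSup_of_le (⟨μ, hμ⟩ : f.charpoly.roots.toFinset) le_rfl
  · rw [maxGenEigenspace_eq_bot_of_notMem_roots (by simpa using hμ)]
    exact bot_le

theorem Module.End.sum_sq_rootMultiplicity_le_rootMultiplicity_zero_charpoly_mulLeft_sub_mulRight
    [IsAlgClosed K] [DecidableEq K] (f : End K V) :
    ∑ μ ∈ f.charpoly.roots.toFinset, f.charpoly.rootMultiplicity μ ^ 2 ≤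
      (mulLeft K f - mulRight K f).charpoly.rootMultiplicity 0 := by
  set s := f.charpoly.roots.toFinset
  let G : s → Submodule K V := fun μ => f.maxGenEigenspace μ
  have hG : DirectSum.IsInternal G := f.isInternal_maxGenEigenspace_roots_charpoly
  let b := hG.collectedBasis fun μ => finBasis K (G μ)
  let blockPair (x : Σ μ : s, Fin (finrank K (G μ)) × Fin (finrank K (G μ))) :
      (Σ μ : s, Fin (finrank K (G μ))) × (Σ μ : s, Fin (finrank K (G μ))) :=
    (⟨x.1, x.2.1⟩, ⟨x.1, x.2.2⟩)
  have hblock (x) : b.end (blockPair x) ∈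
      End.maxGenEigenspace (mulLeft K f - mulRight K f) 0 := by
    obtain ⟨μ, i, j⟩ := x
    refine End.mem_maxGenEigenspace_zero_mulLeft_sub_mulRight (μ := μ) ?_ ?_
    · rintro _ ⟨x, rfl⟩
      rw [b.end_apply_eq_smul]
      have hmem : b ⟨μ, i⟩ ∈ G μ := hG.collectedBasis_mem (fun μ => finBasis K (G μ)) ⟨μ, i⟩
      exact Submodule.smul_mem _ _ hmem
    · intro ν hν x hx
      rw [mem_ker, b.end_apply_eq_smul]
      by_cases hνs : ν ∈ s
      · rw [hG.collectedBasis_repr_of_mem_ne _ (i := ⟨ν, hνs⟩) (Subtype.coe_ne_coe.1 hν) hx,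
          zero_smul]
      · rw [End.maxGenEigenspace_eq_bot_of_notMem_roots (by simpa [s] using hνs)] at hx
        rw [(Submodule.mem_bot K).1 hx, map_zero, Finsupp.zero_apply, zero_smul]
  have hinj : Function.Injective blockPair := by
    rintro ⟨μ, i, j⟩ ⟨ν, i', j'⟩ h
    simp only [blockPair, Prod.mk.injEq, Sigma.mk.inj_iff] at h
    obtain ⟨⟨rfl, hi⟩, -, hj⟩ := h
    simp_all
  have hli : LinearIndependent K fun x => (⟨b.end (blockPair x), hblock x⟩ :
      End.maxGenEigenspace (mulLeft K f - mulRight K f) 0) :=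
    .of_comp (Submodule.subtype _) (b.end.linearIndependent.comp _ hinj)
  rw [← finrank_maxGenEigenspace_eq]
  refine le_of_eq_of_le ?_ hli.fintype_card_le_finrank
  simp [Fintype.card_sigma, G, finrank_maxGenEigenspace_eq, sq, ← Finset.sum_coe_sort s]

theorem Module.End.nodup_roots_charpoly_of_rootMultiplicity_le [IsAlgClosed K] (f : End K V)
    (h : (mulLeft K f - mulRight K f).charpoly.rootMultiplicity 0 ≤ finrank K V) :
    f.charpoly.roots.Nodup := by
  classical
  have hsum : ∑ μ ∈ f.charpoly.roots.toFinset, f.charpoly.rootMultiplicity μ = finrank K V := by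
    simp_rw [← count_roots]
    rw [Multiset.toFinset_sum_count_eq, IsAlgClosed.card_roots_eq_natDegree, charpoly_natDegree]
  have hle := Finset.forall_le_one_of_sum_sq_le_sum _ _
    ((f.sum_sq_rootMultiplicity_le_rootMultiplicity_zero_charpoly_mulLeft_sub_mulRight).trans
      (h.trans hsum.ge))
  refine Multiset.nodup_iff_count_le_one.2 fun μ => ?_
  by_cases hμ : μ ∈ f.charpoly.roots
  · rw [count_roots]
    exact hle μ (Multiset.mem_toFinset.2 hμ)
  · rw [Multiset.count_eq_zero.2 hμ]
    exact zero_le_one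

end GenEigenspace

theorem stmt3 (V : Type*) [AddCommGroup V] [Module ℂ V] [FiniteDimensional ℂ V]
    (n : ℕ) (hn : Module.finrank ℂ V = n) (φ : Module.End ℂ V) :
    (∃ l : Fin n → ℂ, Function.Injective l ∧ φ.charpoly = ∏ i, (X - C (l i))) ↔
    Polynomial.rootMultiplicity 0
      ((LinearMap.mulLeft ℂ φ - LinearMap.mulRight ℂ φ).charpoly) = n := by
  subst hn
  constructor
  · rintro ⟨l, hl, hφ⟩
    obtain ⟨b, hb⟩ := End.exists_basis_apply_eq_smul_of_charpoly_eq (Fintype.card_fin _) hl hφ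
    rw [rootMultiplicity_zero_charpoly_mulLeft_sub_mulRight_of_apply_eq_smul b hl hb,
      Fintype.card_fin]
  · intro h
    have := exists_injective_eq_prod_X_sub_C_of_nodup_roots φ.charpoly_monic
      IsAlgClosed.card_roots_eq_natDegree (φ.nodup_roots_charpoly_of_rootMultiplicity_le h.le)
    rwa [charpoly_natDegree] at this
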